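/- arXiv:2312.02915 — 3 statements merged into one kernel-verified Lean document; each statement's English description precedes it below -/
import Mathlib

section
/- Suppose that for each plant i = 1,…,N one has A_i^τ ξ_i ≠ 0 for every τ ∈ {1,…,T}. If there exists a control logic υ_T : {0,…,T−1} → ℝ^N, υ_T(t) = (u_1(t),…,u_N(t)), such that ‖υ_T(t)‖_0 ≤ M for all t = 0,…,T−1 and such that for every plant i the trajectory from x_i(0) = ξ_i under (u_i(t))_{t=0}^{T−1} satisfies x_i(T) = 0, then T ≥ ⌈N/M⌉. -/
/-- Trajectory of the discrete-time linear plant `x(t+1) = A x(t) + u(t) b` with `x(0) = ξ`. -/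
def traj {d : ℕ} (A : Matrix (Fin d) (Fin d) ℝ) (b ξ : Fin d → ℝ) (u : ℕ → ℝ) : ℕ → Fin d → ℝ
  | 0 => ξ
  | t + 1 => A.mulVec (traj A b ξ u t) + u t • b

/-- The ℓ0-"norm" of a vector: the number of its nonzero entries. -/
noncomputable def l0 {n : ℕ} (v : Fin n → ℝ) : ℕ :=
  (Finset.univ.filter fun i => v i ≠ 0).card

lemma traj_zero_input {d : ℕ} (A : Matrix (Fin d) (Fin d) ℝ) (b ξ : Fin d → ℝ) (u : ℕ → ℝ)
    (T : ℕ) (h : ∀ t < T, u t = 0) : traj A b ξ u T = (A ^ T).mulVec ξ := by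
  induction T with
  | zero => simp [traj, Matrix.mulVec]
  | succ n ih =>
    rw [traj, ih (fun t ht => h t (Nat.lt_succ_of_lt ht)), h n (Nat.lt_succ_self n)]
    simp [pow_succ', Matrix.mulVec_mulVec]

/-- if no plant can reach `0` in open loop within the horizon `T`, and a control
logic obeying the capacity constraint `M` steers every plant's initial state to `0` at time
`T`, then `T ≥ ⌈N/M⌉`. -/
theorem stmt2
    (N M : ℕ) (hM : 0 < M) (hMN : M < N)
    (T : ℕ) (hT : 1 ≤ T)
    (d : Fin N → ℕ)
    (A : ∀ i, Matrix (Fin (d i)) (Fin (d i)) ℝ)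
    (b : ∀ i, Fin (d i) → ℝ)
    (ξ : ∀ i, Fin (d i) → ℝ)
    (hnoopen : ∀ i, ∀ τ : ℕ, 1 ≤ τ → τ ≤ T → (A i ^ τ).mulVec (ξ i) ≠ 0)
    (u : Fin N → ℕ → ℝ)
    (hsparse : ∀ t < T, l0 (fun i => u i t) ≤ M)
    (hsteer : ∀ i, traj (A i) (b i) (ξ i) (u i) T = 0) :
    (⌈(N : ℚ) / (M : ℚ)⌉ : ℤ) ≤ (T : ℤ) := by
  -- every plant has a nonzero input at some time < T
  have hex : ∀ i : Fin N, ∃ t < T, u i t ≠ 0 := by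
    intro i
    by_contra h
    push_neg at h
    have := traj_zero_input (A i) (b i) (ξ i) (u i) T h
    rw [hsteer i] at this
    exact hnoopen i T hT le_rfl this.symm
  choose f hf hfne using hex
  -- count: N ≤ T * M
  have hNTM : N ≤ T * M := by
    calc N = Finset.univ.card := (Finset.card_fin N).symm
    _ = ∑ t ∈ Finset.range T, (Finset.univ.filter fun i => f i = t).card := by
        apply Finset.card_eq_sum_card_fiberwise
        intro i _
        simpa using hf i
    _ ≤ ∑ t ∈ Finset.range T, M := by
        apply Finset.sum_le_sum
        intro t ht
        refine le_trans ?_ (hsparse t (Finset.mem_range.mp ht))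
        unfold l0
        apply Finset.card_le_card
        intro i hi
        simp only [Finset.mem_filter, Finset.mem_univ, true_and] at hi ⊢
        rw [← hi]
        exact hfne i
    _ = T * M := by simp [Finset.sum_const, mul_comm]
  rw [Int.ceil_le]
  push_cast
  rw [div_le_iff₀ (by exact_mod_cast hM)]
  have : (N : ℚ) ≤ (T : ℚ) * (M : ℚ) := by exact_mod_cast hNTM
  linarith
end

section
/- Suppose: (C1) every plant i = 1,…,N is reachable, i.e., Ψ_i = [A_i^{d_i−1} b_i, …, A_i b_i, b_i] ∈ ℝ^{d_i×d_i} is invertible; and (C2) with J = ⌈N/M⌉ there exist d̂_1,…,d̂_J ∈ ℕ and subsets P_1,…,P_J ⊆ {1,…,N} such that |P_j| ≤ M for all j, the P_j are pairwise disjoint, ∪_{j=1}^J P_j = {1,…,N}, d̂_j > d_i for every i ∈ P_j and every j, and Σ_{j=1}^J d̂_j ≤ T. For each j let d̃_j = Σ_{k=1}^{j−1} d̂_k, and for each i ∈ P_j define the control sequence (u_i(t))_{t=0}^{T−1} by u_i(t) = 0 for t ∉ {d̃_j + d̂_j − d_i, …, d̃_j + d̂_j − 1} and (u_i(d̃_j+d̂_j−d_i),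 …, u_i(d̃_j+d̂_j−1)) = −Ψ_i^{−1} A_i^{d̂_j} A_i^{d̃_j} ξ_i. Then for every plant i = 1,…,N the trajectory from x_i(0) = ξ_i under (u_i(t))_{t=0}^{T−1} satisfies x_i(T) = 0, and for every t = 0,…,T−1 the vector (u_1(t),…,u_N(t)) ∈ ℝ^N has at most M nonzero entries. -/
/-- The reachability matrix `Ψ = [A^{d-1} b, A^{d-2} b, …, A b, b]` of a plant `(A, b)`. -/
def Psi (d : ℕ) (A : Matrix (Fin d) (Fin d) ℝ) (b : Fin d → ℝ) :
    Matrix (Fin d) (Fin d) ℝ :=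
  Matrix.of fun j (k : Fin d) => ((A ^ (d - 1 - (k : ℕ))).mulVec b) j

lemma traj_eq {d : ℕ} (A : Matrix (Fin d) (Fin d) ℝ) (b ξ : Fin d → ℝ) (u : ℕ → ℝ) (n : ℕ) :
    traj A b ξ u n = (A ^ n).mulVec ξ + ∑ t ∈ Finset.range n, u t • (A ^ (n - 1 - t)).mulVec b := by
  induction n with
  | zero => simp [traj]
  | succ n ih =>
    rw [show traj A b ξ u (n+1) = A.mulVec (traj A b ξ u n) + u n • b from rfl, ih,
      Finset.sum_range_succ, Matrix.mulVec_add]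
    have h1 : A.mulVec ((A ^ n).mulVec ξ) = (A ^ (n+1)).mulVec ξ := by
      rw [Matrix.mulVec_mulVec, ← pow_succ']
    have h2 : A.mulVec (∑ t ∈ Finset.range n, u t • (A ^ (n - 1 - t)).mulVec b)
        = ∑ t ∈ Finset.range n, u t • (A ^ (n + 1 - 1 - t)).mulVec b := by
      rw [← Matrix.mulVecLin_apply, map_sum]
      refine Finset.sum_congr rfl fun t ht => ?_
      simp only [Finset.mem_range] at ht
      have he : n - 1 - t + 1 = n + 1 - 1 - t := by omega
      rw [map_smul, Matrix.mulVecLin_apply, Matrix.mulVec_mulVec, ← pow_succ', he]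
    rw [h1, h2, add_assoc]
    congr 2
    simp

lemma psi_mulVec {d : ℕ} (A : Matrix (Fin d) (Fin d) ℝ) (b : Fin d → ℝ) (v : Fin d → ℝ) :
    (Psi d A b).mulVec v = ∑ k : Fin d, v k • (A ^ (d - 1 - (k : ℕ))).mulVec b := by
  funext j
  simp [Psi, Matrix.mulVec, dotProduct, Finset.sum_apply, mul_comm]

/-- under conditions (C1)-(C2), the control logic constructed by
Algorithm 2 (segments `P_j` of the horizon of lengths `d̂_j`, last `d_i` entries
of each segment given by `-Ψ_i⁻¹ A_i^{d̂_j} A_i^{d̃_j} ξ_i`) steers every plant's initial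
state to `0` at time `T` and has at most `M` nonzero entries at every time instant. -/
theorem stmt9
    (N M : ℕ) (hM : 0 < M) (hMN : M < N)
    (T : ℕ)
    (d : Fin N → ℕ)
    (A : ∀ i, Matrix (Fin (d i)) (Fin (d i)) ℝ)
    (b : ∀ i, Fin (d i) → ℝ)
    (ξ : ∀ i, Fin (d i) → ℝ)
    -- (C1) every plant is reachable
    (hreach : ∀ i, IsUnit (Psi (d i) (A i) (b i)))
    -- (C2)
    (J : ℕ) (hJ : J = ⌈(N : ℚ) / (M : ℚ)⌉₊)
    (P : Fin J → Finset (Fin N))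
    (dhat : Fin J → ℕ)
    (hPcard : ∀ j, (P j).card ≤ M)
    (hPdisj : ∀ j j', j ≠ j' → Disjoint (P j) (P j'))
    (hPcover : (Finset.univ : Finset (Fin J)).biUnion P = Finset.univ)
    (hdim : ∀ j, ∀ i ∈ P j, d i < dhat j)
    (hhorizon : ∑ j, dhat j ≤ T)
    -- the partial sums d̃_j = Σ_{k<j} d̂_k
    (dtil : Fin J → ℕ) (hdtil : ∀ j, dtil j = ∑ k ∈ Finset.Iio j, dhat k)
    -- the control logic of Algorithm 2
    (u : Fin N → ℕ → ℝ)
    (hu0 : ∀ j, ∀ i ∈ P j, ∀ t,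
      (t < dtil j + dhat j - d i ∨ dtil j + dhat j ≤ t) → u i t = 0)
    (hu1 : ∀ j, ∀ i ∈ P j, ∀ k : Fin (d i),
      u i (dtil j + dhat j - d i + (k : ℕ))
        = (-(Psi (d i) (A i) (b i))⁻¹.mulVec
            ((A i ^ dhat j).mulVec ((A i ^ dtil j).mulVec (ξ i)))) k) :
    (∀ i, traj (A i) (b i) (ξ i) (u i) T = 0) ∧
      (∀ t < T, l0 (fun i => u i t) ≤ M) := by
  -- cover: every plant belongs to some segment
  have hcov : ∀ i : Fin N, ∃ j, i ∈ P j := by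
    intro i
    have hi : i ∈ (Finset.univ : Finset (Fin J)).biUnion P := hPcover.symm ▸ Finset.mem_univ i
    obtain ⟨j, -, hj⟩ := Finset.mem_biUnion.mp hi
    exact ⟨j, hj⟩
  -- each segment fits inside the horizon
  have hseg : ∀ j : Fin J, dtil j + dhat j ≤ T := by
    intro j
    have h1 : dtil j + dhat j = ∑ k ∈ insert j (Finset.Iio j), dhat k := by
      rw [Finset.sum_insert (by simp), hdtil, add_comm]
    have h2 : ∑ k ∈ insert j (Finset.Iio j), dhat k ≤ ∑ k, dhat k :=
      Finset.sum_le_sum_of_subset (Finset.subset_univ _)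
    omega
  -- monotonicity of partial sums
  have hmono : ∀ j j' : Fin J, j < j' → dtil j + dhat j ≤ dtil j' := by
    intro j j' hlt
    have h1 : dtil j + dhat j = ∑ k ∈ insert j (Finset.Iio j), dhat k := by
      rw [Finset.sum_insert (by simp), hdtil, add_comm]
    have hsub : insert j (Finset.Iio j) ⊆ Finset.Iio j' := by
      intro k hk
      simp only [Finset.mem_insert, Finset.mem_Iio] at hk ⊢
      rcases hk with rfl | hk
      · exact hlt
      · exact hk.trans hlt
    rw [h1, hdtil j']
    exact Finset.sum_le_sum_of_subset hsub
  constructor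
  · -- every plant is steered to 0
    intro i
    obtain ⟨j, hij⟩ := hcov i
    have hdij : d i < dhat j := hdim j i hij
    have hTj : dtil j + dhat j ≤ T := hseg j
    set s : ℕ := dtil j + dhat j - d i with hs
    set w : Fin (d i) → ℝ := (A i ^ dhat j).mulVec ((A i ^ dtil j).mulVec (ξ i)) with hw
    set v : Fin (d i) → ℝ := -(Psi (d i) (A i) (b i))⁻¹.mulVec w with hv
    rw [traj_eq]
    -- restrict the sum to the support
    have hsub : Finset.Ico s (s + d i) ⊆ Finset.range T := by
      intro t ht
      simp only [Finset.mem_Ico, Finset.mem_range] at ht ⊢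
      omega
    have hz : ∀ t ∈ Finset.range T, t ∉ Finset.Ico s (s + d i) →
        u i t • (A i ^ (T - 1 - t)).mulVec (b i) = 0 := by
      intro t _ ht
      simp only [Finset.mem_Ico, not_and, not_lt] at ht
      have : u i t = 0 := by
        apply hu0 j i hij t
        omega
      simp [this]
    rw [← Finset.sum_subset hsub hz, Finset.sum_Ico_eq_sum_range]
    have hd : s + d i - s = d i := by omega
    rw [hd, ← Fin.sum_univ_eq_sum_range]
    have hterm : ∀ k : Fin (d i),
        u i (s + (k : ℕ)) • (A i ^ (T - 1 - (s + (k : ℕ)))).mulVec (b i)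
          = v k • (A i ^ (T - (dtil j + dhat j))).mulVec
              ((A i ^ (d i - 1 - (k : ℕ))).mulVec (b i)) := by
      intro k
      have hk := k.isLt
      have he : T - 1 - (s + (k : ℕ)) = (T - (dtil j + dhat j)) + (d i - 1 - (k : ℕ)) := by
        omega
      rw [hu1 j i hij k, he, pow_add, ← Matrix.mulVec_mulVec]
    rw [Finset.sum_congr rfl fun k _ => hterm k]
    have hlin : ∑ k : Fin (d i), v k • (A i ^ (T - (dtil j + dhat j))).mulVec
          ((A i ^ (d i - 1 - (k : ℕ))).mulVec (b i))
        = (A i ^ (T - (dtil j + dhat j))).mulVec ((Psi (d i) (A i) (b i)).mulVec v) := by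
      rw [psi_mulVec, ← Matrix.mulVecLin_apply, map_sum]
      refine Finset.sum_congr rfl fun k _ => ?_
      rw [map_smul, Matrix.mulVecLin_apply]
    rw [hlin]
    have hPsiInv : (Psi (d i) (A i) (b i)).mulVec v = -w := by
      have hdet : IsUnit (Psi (d i) (A i) (b i)).det :=
        (Matrix.isUnit_iff_isUnit_det _).mp (hreach i)
      rw [hv, Matrix.mulVec_neg, Matrix.mulVec_mulVec, Matrix.mul_nonsing_inv _ hdet,
        Matrix.one_mulVec]
    rw [hPsiInv, Matrix.mulVec_neg, hw, Matrix.mulVec_mulVec, Matrix.mulVec_mulVec,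
      ← pow_add, ← pow_add]
    have : T - (dtil j + dhat j) + dhat j + dtil j = T := by omega
    rw [this]
    simp
  · -- sparsity
    intro t ht
    have key : ∀ i : Fin N, u i t ≠ 0 → ∃ j, i ∈ P j ∧ dtil j ≤ t ∧ t < dtil j + dhat j := by
      intro i hi
      obtain ⟨j, hij⟩ := hcov i
      refine ⟨j, hij, ?_, ?_⟩
      · by_contra h
        exact hi (hu0 j i hij t (by have := hdim j i hij; omega))
      · by_contra h
        exact hi (hu0 j i hij t (by omega))
    by_cases hne : ∃ i, u i t ≠ 0
    · obtain ⟨i0, hi0⟩ := hne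
      obtain ⟨j0, _, hj0a, hj0b⟩ := key i0 hi0
      have hsub : (Finset.univ.filter fun i => u i t ≠ 0) ⊆ P j0 := by
        intro i hi
        simp only [Finset.mem_filter, Finset.mem_univ, true_and] at hi
        obtain ⟨j, hij, hja, hjb⟩ := key i hi
        have : j = j0 := by
          rcases lt_trichotomy j j0 with h | h | h
          · have := hmono j j0 h; omega
          · exact h
          · have := hmono j0 j h; omega
        exact this ▸ hij
      calc l0 (fun i => u i t) ≤ (P j0).card := Finset.card_le_card hsub
        _ ≤ M := hPcard j0
    · push_neg at hne
      have : (Finset.univ.filter fun i => u i t ≠ 0) = ∅ := by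
        simp [Finset.filter_eq_empty_iff, hne]
      simp [l0, this]
end

section
/- Let Φ ∈ ℝ^{d×T} and y ∈ ℝ^d, and let F = {u ∈ ℝ^T : Φ u = y}. Suppose û ∈ F is s-sparse (‖û‖_0 ≤ s), that û is the unique minimizer of ‖·‖_0 over F, and that Φ satisfies the restricted isometry property of order 2s with constant δ_{2s} < √2 − 1, i.e., there exists δ ∈ (0, √2 − 1) such that (1−δ)‖z‖_2^2 ≤ ‖Φ z‖_2^2 ≤ (1+δ)‖z‖_2^2 for every z ∈ ℝ^T with ‖z‖_0 ≤ 2s. Then û is a minimizer of the ℓ1-norm over F: for every u ∈ F, ‖û‖_1 ≤ ‖u‖_1. -/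
namespace Stmt12Aux

open Finset Matrix

variable {T d : ℕ}

/-- restriction of a vector to a finset of coordinates -/
noncomputable def res (A : Finset (Fin T)) (z : Fin T → ℝ) : Fin T → ℝ :=
  fun i => if i ∈ A then z i else 0

lemma l0_res_le (A : Finset (Fin T)) (z : Fin T → ℝ) : l0 (res A z) ≤ A.card := by
  apply Finset.card_le_card
  intro i hi
  have hi := Finset.mem_filter.mp hi
  by_contra h
  exact hi.2 (by simp [res, h])

lemma sq_sum_res (A : Finset (Fin T)) (z : Fin T → ℝ) :
    ∑ k, (res A z k) ^ 2 = ∑ i ∈ A, z i ^ 2 := by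
  rw [← Finset.sum_filter_of_ne (p := (· ∈ A)) (s := univ)]
  · rw [Finset.filter_mem_eq_inter, Finset.univ_inter]
    exact Finset.sum_congr rfl fun i hi => by simp [res, hi]
  · intro i _ h
    by_contra hA
    exact h (by simp [res, hA])

lemma l0_add_le (x y : Fin T → ℝ) : l0 (x + y) ≤ l0 x + l0 y := by
  calc l0 (x+y) ≤ ((Finset.univ.filter fun i => x i ≠ 0) ∪ (Finset.univ.filter fun i => y i ≠ 0)).card := by
        apply Finset.card_le_card
        intro i hi
        simp only [mem_filter, mem_union, Pi.add_apply] at *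
        by_contra h
        push_neg at h
        obtain ⟨h1, h2⟩ := h
        exact hi.2 (by rw [h1 (Finset.mem_univ i), h2 (Finset.mem_univ i), add_zero])
    _ ≤ l0 x + l0 y := (Finset.card_union_le _ _)

lemma l0_sub_le (x y : Fin T → ℝ) : l0 (x - y) ≤ l0 x + l0 y := by
  have : l0 (-y) = l0 y := by
    unfold l0; congr 1; apply Finset.filter_congr; intro i _; simp
  calc l0 (x - y) = l0 (x + (-y)) := by rw [sub_eq_add_neg]
    _ ≤ l0 x + l0 (-y) := l0_add_le x (-y)
    _ = l0 x + l0 y := by rw [this]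


variable (Φ : Matrix (Fin d) (Fin T) ℝ) (s : ℕ) (δ : ℝ)

/-- abbreviation for the RIP hypothesis -/
def RIP : Prop :=
  ∀ z : Fin T → ℝ, l0 z ≤ 2 * s →
    (1 - δ) * (∑ k, (z k) ^ 2) ≤ (∑ j, (Φ.mulVec z j) ^ 2) ∧
      (∑ j, (Φ.mulVec z j) ^ 2) ≤ (1 + δ) * (∑ k, (z k) ^ 2)

lemma sum_sq_mulVec (z : Fin T → ℝ) :
    ∑ j, (Φ.mulVec z j) ^ 2 = (Φ.mulVec z) ⬝ᵥ (Φ.mulVec z) := by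
  simp [dotProduct, sq]

variable {Φ s δ}

lemma ro_half (hδ0 : 0 ≤ δ) (hR : RIP Φ s δ) (x y : Fin T → ℝ)
    (hdisj : ∀ i, x i = 0 ∨ y i = 0) (hl0 : l0 x + l0 y ≤ 2 * s) :
    |(Φ.mulVec x) ⬝ᵥ (Φ.mulVec y)| ≤ δ * ((∑ k, x k ^ 2) + (∑ k, y k ^ 2)) / 2 := by
  have hxy0 : ∀ k, x k * y k = 0 := fun k => by rcases hdisj k with h | h <;> simp [h]
  have hQadd : (∑ k, (x k + y k) ^ 2) = (∑ k, x k ^ 2) + (∑ k, y k ^ 2) := by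
    rw [← Finset.sum_add_distrib]
    refine Finset.sum_congr rfl fun k _ => ?_
    have h := hxy0 k; nlinarith [h]
  have hQsub : (∑ k, (x k - y k) ^ 2) = (∑ k, x k ^ 2) + (∑ k, y k ^ 2) := by
    rw [← Finset.sum_add_distrib]
    refine Finset.sum_congr rfl fun k _ => ?_
    have h := hxy0 k; nlinarith [h]
  have h1 := hR (x + y) (le_trans (l0_add_le x y) hl0)
  have h2 := hR (x - y) (le_trans (l0_sub_le x y) hl0)
  rw [sum_sq_mulVec, Matrix.mulVec_add] at h1
  rw [sum_sq_mulVec, Matrix.mulVec_sub] at h2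
  have e1 : (Φ.mulVec x + Φ.mulVec y) ⬝ᵥ (Φ.mulVec x + Φ.mulVec y)
      = (Φ.mulVec x) ⬝ᵥ (Φ.mulVec x) + 2 * ((Φ.mulVec x) ⬝ᵥ (Φ.mulVec y))
        + (Φ.mulVec y) ⬝ᵥ (Φ.mulVec y) := by
    rw [add_dotProduct, dotProduct_add, dotProduct_add,
      dotProduct_comm (Φ.mulVec y) (Φ.mulVec x)]
    ring
  have e2 : (Φ.mulVec x - Φ.mulVec y) ⬝ᵥ (Φ.mulVec x - Φ.mulVec y)
      = (Φ.mulVec x) ⬝ᵥ (Φ.mulVec x) - 2 * ((Φ.mulVec x) ⬝ᵥ (Φ.mulVec y))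
        + (Φ.mulVec y) ⬝ᵥ (Φ.mulVec y) := by
    rw [sub_dotProduct, dotProduct_sub, dotProduct_sub,
      dotProduct_comm (Φ.mulVec y) (Φ.mulVec x)]
    ring
  simp only [Pi.add_apply, Pi.sub_apply] at h1 h2
  rw [e1, hQadd] at h1
  rw [e2, hQsub] at h2
  rw [abs_le]
  constructor <;> nlinarith [h1.1, h1.2, h2.1, h2.2]

lemma sum_sq_nonneg (x : Fin T → ℝ) : (0:ℝ) ≤ ∑ k, x k ^ 2 :=
  Finset.sum_nonneg fun k _ => sq_nonneg _

lemma eq_zero_of_sum_sq (x : Fin T → ℝ) (h : ∑ k, x k ^ 2 = 0) : x = 0 := by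
  funext k
  have := (Finset.sum_eq_zero_iff_of_nonneg (fun i _ => sq_nonneg (x i))).mp h k (Finset.mem_univ k)
  exact pow_eq_zero_iff (by norm_num) |>.mp this

lemma ro (hδ0 : 0 ≤ δ) (hR : RIP Φ s δ) (x y : Fin T → ℝ)
    (hdisj : ∀ i, x i = 0 ∨ y i = 0) (hl0 : l0 x + l0 y ≤ 2 * s) :
    |(Φ.mulVec x) ⬝ᵥ (Φ.mulVec y)|
      ≤ δ * Real.sqrt (∑ k, x k ^ 2) * Real.sqrt (∑ k, y k ^ 2) := by
  set a := Real.sqrt (∑ k, x k ^ 2) with ha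
  set b := Real.sqrt (∑ k, y k ^ 2) with hb
  have ha2 : a ^ 2 = ∑ k, x k ^ 2 := Real.sq_sqrt (sum_sq_nonneg x)
  have hb2 : b ^ 2 = ∑ k, y k ^ 2 := Real.sq_sqrt (sum_sq_nonneg y)
  have ha0 : 0 ≤ a := Real.sqrt_nonneg _
  have hb0 : 0 ≤ b := Real.sqrt_nonneg _
  rcases eq_or_lt_of_le ha0 with h | hapos
  · have : x = 0 := eq_zero_of_sum_sq x (by rw [← ha2, ← h]; ring)
    rw [this, Matrix.mulVec_zero, zero_dotProduct, abs_zero]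
    positivity
  rcases eq_or_lt_of_le hb0 with h | hbpos
  · have : y = 0 := eq_zero_of_sum_sq y (by rw [← hb2, ← h]; ring)
    rw [this, Matrix.mulVec_zero, dotProduct_zero, abs_zero]
    positivity
  -- scale x by b and y by a
  have key := ro_half hδ0 hR (b • x) (a • y)
    (fun i => by rcases hdisj i with h | h <;> simp [h])
    (by
      have h1 : l0 (b • x) ≤ l0 x := by
        apply Finset.card_le_card
        intro i hi
        simp only [Finset.mem_filter, Pi.smul_apply, smul_eq_mul] at *
        exact ⟨hi.1, fun h => hi.2 (by rw [h, mul_zero])⟩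
      have h2 : l0 (a • y) ≤ l0 y := by
        apply Finset.card_le_card
        intro i hi
        simp only [Finset.mem_filter, Pi.smul_apply, smul_eq_mul] at *
        exact ⟨hi.1, fun h => hi.2 (by rw [h, mul_zero])⟩
      omega)
  have hs1 : (∑ k, (b • x) k ^ 2) = b ^ 2 * ∑ k, x k ^ 2 := by
    rw [Finset.mul_sum]; exact Finset.sum_congr rfl fun k _ => by simp [mul_pow]
  have hs2 : (∑ k, (a • y) k ^ 2) = a ^ 2 * ∑ k, y k ^ 2 := by
    rw [Finset.mul_sum]; exact Finset.sum_congr rfl fun k _ => by simp [mul_pow]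
  have hmv : (Φ.mulVec (b • x)) ⬝ᵥ (Φ.mulVec (a • y))
      = (b * a) * ((Φ.mulVec x) ⬝ᵥ (Φ.mulVec y)) := by
    rw [Matrix.mulVec_smul, Matrix.mulVec_smul, smul_dotProduct,
      dotProduct_smul]
    simp [smul_eq_mul]; ring
  rw [hmv, hs1, hs2, ← ha2, ← hb2, abs_mul, abs_of_pos (by positivity : (0:ℝ) < b * a)] at key
  have h3 : b * a * |(Φ.mulVec x) ⬝ᵥ (Φ.mulVec y)| ≤ b * a * (δ * a * b) := by
    calc b * a * |(Φ.mulVec x) ⬝ᵥ (Φ.mulVec y)| ≤ δ * (b^2*a^2 + a^2*b^2)/2 := key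
      _ = b * a * (δ * a * b) := by ring
  have := le_of_mul_le_mul_left h3 (by positivity : (0:ℝ) < b * a)
  calc |(Φ.mulVec x) ⬝ᵥ (Φ.mulVec y)| ≤ δ * a * b := this
    _ = δ * a * b := rfl


/-- `ℓ2` norm of `z` restricted to `A` -/
noncomputable def N2 (z : Fin T → ℝ) (A : Finset (Fin T)) : ℝ :=
  Real.sqrt (∑ i ∈ A, z i ^ 2)

lemma N2_nonneg (z : Fin T → ℝ) (A : Finset (Fin T)) : 0 ≤ N2 z A :=
  Real.sqrt_nonneg _

lemma N2_sq (z : Fin T → ℝ) (A : Finset (Fin T)) : (N2 z A) ^ 2 = ∑ i ∈ A, z i ^ 2 :=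
  Real.sq_sqrt (Finset.sum_nonneg fun i _ => sq_nonneg _)

lemma sqrt_sq_sum_res (A : Finset (Fin T)) (z : Fin T → ℝ) :
    Real.sqrt (∑ k, (res A z k) ^ 2) = N2 z A := by rw [sq_sum_res]; rfl

lemma res_disj_pointwise {A B : Finset (Fin T)} (h : Disjoint A B) (z : Fin T → ℝ) :
    ∀ i, res A z i = 0 ∨ res B z i = 0 := by
  intro i
  by_cases hi : i ∈ A
  · right
    have : i ∉ B := Finset.disjoint_left.mp h hi
    simp [res, this]
  · left
    simp [res, hi]

lemma ro_res (hδ0 : 0 ≤ δ) (hR : RIP Φ s δ) (z : Fin T → ℝ) (A B : Finset (Fin T))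
    (hdisj : Disjoint A B) (hcard : A.card + B.card ≤ 2 * s) :
    |(Φ.mulVec (res A z)) ⬝ᵥ (Φ.mulVec (res B z))| ≤ δ * N2 z A * N2 z B := by
  have h := ro hδ0 hR (res A z) (res B z) (res_disj_pointwise hdisj z)
    (le_trans (add_le_add (l0_res_le A z) (l0_res_le B z)) hcard)
  rwa [sqrt_sq_sum_res, sqrt_sq_sum_res] at h

lemma nsp (hδ0 : 0 < δ) (hδ1 : δ < Real.sqrt 2 - 1) (hR : RIP Φ s δ)
    (g : Fin T → ℝ) (hg : Φ.mulVec g = 0)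
    (S : Finset (Fin T)) (hS : S.card ≤ s) :
    ∑ i ∈ S, |g i| ≤ ∑ i ∈ Sᶜ, |g i| := by
  have hsqrt2sq : (Real.sqrt 2) ^ 2 = 2 := Real.sq_sqrt (by norm_num)
  have hsqrt2nn : (0:ℝ) ≤ Real.sqrt 2 := Real.sqrt_nonneg 2
  have hδlt1 : δ < 1 := by nlinarith
  have h1δ : (0:ℝ) < 1 - δ := by linarith
  have hsqrt2 : Real.sqrt 2 * δ < 1 - δ := by nlinarith
  rcases Nat.eq_zero_or_pos s with hs0 | hspos
  · have : S = ∅ := Finset.card_eq_zero.mp (by omega)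
    rw [this]
    simp only [Finset.sum_empty]
    exact Finset.sum_nonneg fun i _ => abs_nonneg _
  set A := Sᶜ with hA
  rcases Nat.eq_zero_or_pos A.card with hn0 | npos
  · -- A empty : S = univ, g is s-sparse and in the kernel, hence 0
    have hAe : A = ∅ := Finset.card_eq_zero.mp hn0
    have hl0g : l0 g ≤ 2 * s := by
      have h1 : (Finset.univ.filter fun i => g i ≠ 0) ⊆ Finset.univ := Finset.filter_subset _ _
      have h2 : (Finset.univ : Finset (Fin T)) = S := ((Finset.compl_eq_empty_iff S).mp hAe).symm
      calc l0 g ≤ (Finset.univ : Finset (Fin T)).card := Finset.card_le_card h1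
        _ = S.card := by rw [h2]
        _ ≤ 2 * s := by omega
    have hlow := (hR g hl0g).1
    rw [hg] at hlow
    simp at hlow
    have : ∑ k, g k ^ 2 = 0 := by
      have := sum_sq_nonneg g
      nlinarith
    have hg0 : g = 0 := eq_zero_of_sum_sq g this
    rw [hg0]
    simp
  -- main case
  set n := A.card with hn
  -- sorted enumeration of A by decreasing |g|
  set e0 := A.orderIsoOfFin hn.symm with he0
  set f : Fin n → ℝ := fun k => -|g (e0 k)| with hf
  set σ := Tuple.sort f with hσ
  have hmono : Monotone (f ∘ σ) := Tuple.monotone_sort f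
  set E : ℕ → Fin T := fun k => if h : k < n then (e0 (σ ⟨k, h⟩) : Fin T)
    else (e0 (σ ⟨0, npos⟩) : Fin T) with hE
  have hEmem : ∀ k, k < n → E k ∈ A := by
    intro k h
    simp only [hE, dif_pos h]
    exact (e0 (σ ⟨k, h⟩)).2
  have hEinj : ∀ k l, k < n → l < n → E k = E l → k = l := by
    intro k l hk hl h
    simp only [hE, dif_pos hk, dif_pos hl] at h
    have h2 : σ ⟨k, hk⟩ = σ ⟨l, hl⟩ := e0.injective (Subtype.coe_injective h)
    have h3 : (⟨k, hk⟩ : Fin n) = ⟨l, hl⟩ := σ.injective h2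
    exact congrArg Fin.val h3
  have hEanti : ∀ k l, k ≤ l → ∀ hl : l < n, |g (E l)| ≤ |g (E k)| := by
    intro k l hkl hl
    have hk : k < n := lt_of_le_of_lt hkl hl
    have := hmono (show (⟨k, hk⟩ : Fin n) ≤ ⟨l, hl⟩ from hkl)
    simp only [Function.comp_apply, hf] at this
    simp only [hE, dif_pos hk, dif_pos hl]
    linarith
  have hEsurj : ∀ a ∈ A, ∃ k, ∃ h : k < n, E k = a := by
    intro a ha
    obtain ⟨j, hj⟩ := e0.surjective ⟨a, ha⟩
    refine ⟨(σ.symm j : Fin n).1, (σ.symm j).2, ?_⟩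
    simp only [hE, dif_pos (σ.symm j).2]
    rw [show (⟨(σ.symm j).1, (σ.symm j).2⟩ : Fin n) = σ.symm j from rfl]
    rw [Equiv.apply_symm_apply, hj]
  -- blocks
  set C : ℕ → Finset ℕ := fun j => Finset.Ico (j*s) (min ((j+1)*s) n) with hC
  set B : ℕ → Finset (Fin T) := fun j => (C j).image E with hB
  set M := n / s + 1 with hM
  have hCmem : ∀ j k, k ∈ C j ↔ j*s ≤ k ∧ k < (j+1)*s ∧ k < n := by
    intro j k
    simp only [hC, Finset.mem_Ico, lt_min_iff]
  have hCj : ∀ j k, k ∈ C j → k / s = j := by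
    intro j k hk
    rw [hCmem] at hk
    exact Nat.div_eq_of_lt_le hk.1 hk.2.1
  have hCdisj : ∀ j j', j ≠ j' → ∀ k, k ∈ C j → k ∈ C j' → False := by
    intro j j' hne k h1 h2
    exact hne ((hCj j k h1).symm.trans (hCj j' k h2))
  have hCcard : ∀ j, (C j).card ≤ s := by
    intro j
    simp only [hC, Nat.card_Ico]
    have : min ((j+1)*s) n ≤ (j+1)*s := min_le_left _ _
    have : (j+1)*s = j*s + s := by ring
    omega
  have hBA : ∀ j, B j ⊆ A := by
    intro j i hi
    simp only [hB, Finset.mem_image] at hi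
    obtain ⟨k, hk, rfl⟩ := hi
    exact hEmem k ((hCmem j k).mp hk).2.2
  have hBcard : ∀ j, (B j).card ≤ s := fun j =>
    le_trans Finset.card_image_le (hCcard j)
  have hBdisj : ∀ j j', j ≠ j' → ∀ i, i ∈ B j → i ∈ B j' → False := by
    intro j j' hne i h1 h2
    simp only [hB, Finset.mem_image] at h1 h2
    obtain ⟨k, hk, rfl⟩ := h1
    obtain ⟨k', hk', hkk'⟩ := h2
    have hkn : k < n := ((hCmem j k).mp hk).2.2
    have hk'n : k' < n := ((hCmem j' k').mp hk').2.2
    have heq := hEinj k' k hk'n hkn hkk'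
    rw [heq] at hk'
    exact hCdisj j j' hne k hk hk'
  have hBsum : ∀ j (F : Fin T → ℝ), ∑ i ∈ B j, F i = ∑ k ∈ C j, F (E k) := by
    intro j F
    apply Finset.sum_image
    intro x hx y hy hxy
    exact hEinj x y ((hCmem j x).mp hx).2.2 ((hCmem j y).mp hy).2.2 hxy
  have hcover : ∀ a ∈ A, ∃ j, j < M ∧ a ∈ B j := by
    intro a ha
    obtain ⟨k, hk, rfl⟩ := hEsurj a ha
    refine ⟨k / s, ?_, ?_⟩
    · have : k / s ≤ n / s := Nat.div_le_div_right (le_of_lt hk)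
      omega
    · simp only [hB, Finset.mem_image]
      refine ⟨k, ?_, rfl⟩
      rw [hCmem]
      refine ⟨Nat.div_mul_le_self k s, ?_, hk⟩
      rw [← Nat.div_lt_iff_lt_mul hspos] at *
      omega
  have hAeq : A = (Finset.range M).biUnion B := by
    ext i
    simp only [Finset.mem_biUnion, Finset.mem_range]
    constructor
    · intro hi
      obtain ⟨j, hj, hij⟩ := hcover i hi
      exact ⟨j, hj, hij⟩
    · rintro ⟨j, _, hij⟩
      exact hBA j hij
  have hPD : (↑(Finset.range M) : Set ℕ).PairwiseDisjoint B := by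
    intro j _ j' _ hne
    rw [Function.onFun, Finset.disjoint_left]
    intro i hi hi'
    exact hBdisj j j' hne i hi hi'
  have hAsum : ∀ F : Fin T → ℝ, ∑ i ∈ A, F i = ∑ j ∈ Finset.range M, ∑ i ∈ B j, F i := by
    intro F
    rw [hAeq]
    exact Finset.sum_biUnion hPD
  -- vector pieces
  set v01 := res (S ∪ B 0) g with hv01
  set w : ℕ → Fin T → ℝ := fun j => res (B j) g with hw
  have hSB0 : Disjoint S (B 0) := by
    rw [Finset.disjoint_left]
    intro i hi hi'
    have := hBA 0 hi'
    rw [hA, Finset.mem_compl] at this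
    exact this hi
  have hSBj : ∀ j, Disjoint S (B j) := by
    intro j
    rw [Finset.disjoint_left]
    intro i hi hi'
    have := hBA j hi'
    rw [hA, Finset.mem_compl] at this
    exact this hi
  have hB0Bj : ∀ j, 1 ≤ j → Disjoint (B 0) (B j) := by
    intro j hj
    rw [Finset.disjoint_left]
    intro i hi hi'
    exact hBdisj 0 j (by omega) i hi hi'
  -- decomposition of g
  have hdec : v01 = g - ∑ j ∈ Finset.Ico 1 M, w j := by
    funext i
    simp only [hv01, hw, Pi.sub_apply, Finset.sum_apply, res]
    by_cases hiS : i ∈ S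
    · rw [if_pos (Finset.mem_union_left _ hiS)]
      rw [Finset.sum_eq_zero (fun j hj => by
        rw [if_neg]
        intro hiB
        have := hBA j hiB
        rw [hA, Finset.mem_compl] at this
        exact this hiS)]
      ring
    · have hiA : i ∈ A := by rw [hA, Finset.mem_compl]; exact hiS
      obtain ⟨j0, hj0M, hij0⟩ := hcover i hiA
      by_cases hj00 : j0 = 0
      · subst hj00
        rw [if_pos (Finset.mem_union_right _ hij0)]
        rw [Finset.sum_eq_zero (fun j hj => by
          rw [Finset.mem_Ico] at hj
          rw [if_neg]
          intro hiB
          exact hBdisj 0 j (by omega) i hij0 hiB)]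
        ring
      · rw [if_neg (by
          intro hmem
          rcases Finset.mem_union.mp hmem with h | h
          · exact hiS h
          · exact hBdisj j0 0 hj00 i hij0 h)]
        rw [Finset.sum_eq_single_of_mem j0 (Finset.mem_Ico.mpr ⟨by omega, hj0M⟩)
          (fun j hj hne => by
            rw [if_neg]
            intro hiB
            exact hBdisj j0 j (fun h => hne h.symm) i hij0 hiB)]
        rw [if_pos hij0]
        ring
  -- kernel identity
  have hmv_sum : Φ.mulVec (∑ j ∈ Finset.Ico 1 M, w j) = ∑ j ∈ Finset.Ico 1 M, Φ.mulVec (w j) := by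
    funext i
    simp only [Matrix.mulVec, dotProduct, Finset.sum_apply, Finset.mul_sum]
    exact Finset.sum_comm
  have hker : Φ.mulVec v01 = - ∑ j ∈ Finset.Ico 1 M, Φ.mulVec (w j) := by
    rw [hdec, Matrix.mulVec_sub, hg, hmv_sum, zero_sub]
  -- dot product of a sum
  have hdp_sum : ∀ (u : Fin d → ℝ) (t : Finset ℕ) (v : ℕ → Fin d → ℝ),
      u ⬝ᵥ (∑ j ∈ t, v j) = ∑ j ∈ t, u ⬝ᵥ (v j) := by
    intro u t v
    simp only [dotProduct, Finset.sum_apply, Finset.mul_sum]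
    exact Finset.sum_comm
  -- single-block estimates
  have hterm : ∀ j ∈ Finset.Ico 1 M,
      -((Φ.mulVec v01) ⬝ᵥ (Φ.mulVec (w j)))
        ≤ δ * N2 g S * N2 g (B j) + δ * N2 g (B 0) * N2 g (B j) := by
    intro j hj
    rw [Finset.mem_Ico] at hj
    have hsplit : v01 = res S g + res (B 0) g := by
      funext i
      simp only [hv01, res, Pi.add_apply]
      by_cases hiS : i ∈ S
      · rw [if_pos (Finset.mem_union_left _ hiS), if_pos hiS,
          if_neg (Finset.disjoint_left.mp hSB0 hiS)]
        ring
      · by_cases hiB : i ∈ B 0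
        · rw [if_pos (Finset.mem_union_right _ hiB), if_neg hiS, if_pos hiB]
          ring
        · rw [if_neg (by
            intro hmem
            rcases Finset.mem_union.mp hmem with h | h
            · exact hiS h
            · exact hiB h), if_neg hiS, if_neg hiB]
          ring
    have h1 := ro_res hδ0.le hR g S (B j) (hSBj j) (by have := hBcard j; omega)
    have h2 := ro_res hδ0.le hR g (B 0) (B j) (hB0Bj j hj.1)
      (by have := hBcard 0; have := hBcard j; omega)
    have hexp : (Φ.mulVec v01) ⬝ᵥ (Φ.mulVec (w j))
        = (Φ.mulVec (res S g)) ⬝ᵥ (Φ.mulVec (res (B j) g))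
          + (Φ.mulVec (res (B 0) g)) ⬝ᵥ (Φ.mulVec (res (B j) g)) := by
      rw [hsplit, Matrix.mulVec_add, add_dotProduct]
    rw [hexp]
    have a1 := abs_le.mp h1
    have a2 := abs_le.mp h2
    linarith [a1.1, a2.1]
  -- main energy bound
  have hP1 : (Φ.mulVec v01) ⬝ᵥ (Φ.mulVec v01)
      ≤ δ * (N2 g S + N2 g (B 0)) * ∑ j ∈ Finset.Ico 1 M, N2 g (B j) := by
    have hexp : (Φ.mulVec v01) ⬝ᵥ (Φ.mulVec v01)
        = ∑ j ∈ Finset.Ico 1 M, -((Φ.mulVec v01) ⬝ᵥ (Φ.mulVec (w j))) := by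
      nth_rewrite 2 [hker]
      rw [dotProduct_neg, hdp_sum]
      rw [← Finset.sum_neg_distrib]
    rw [hexp]
    calc ∑ j ∈ Finset.Ico 1 M, -((Φ.mulVec v01) ⬝ᵥ (Φ.mulVec (w j)))
        ≤ ∑ j ∈ Finset.Ico 1 M,
            (δ * N2 g S * N2 g (B j) + δ * N2 g (B 0) * N2 g (B j)) :=
          Finset.sum_le_sum hterm
      _ = δ * (N2 g S + N2 g (B 0)) * ∑ j ∈ Finset.Ico 1 M, N2 g (B j) := by
          rw [Finset.mul_sum]
          exact Finset.sum_congr rfl fun j _ => by ring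
  -- RIP lower bound for v01
  have hl0v01 : l0 v01 ≤ 2 * s := by
    refine le_trans (l0_res_le _ _) ?_
    have := Finset.card_union_le S (B 0)
    have := hBcard 0
    omega
  have hRlow := (hR v01 hl0v01).1
  rw [sum_sq_mulVec] at hRlow
  have hQv01 : ∑ k, v01 k ^ 2 = ∑ i ∈ S ∪ B 0, g i ^ 2 := sq_sum_res _ _
  rw [hQv01] at hRlow
  have hQsplit : ∑ i ∈ S ∪ B 0, g i ^ 2 = (∑ i ∈ S, g i ^ 2) + ∑ i ∈ B 0, g i ^ 2 :=
    Finset.sum_union hSB0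
  -- abbreviations as explicit facts
  have haa2 : (N2 g (S ∪ B 0)) ^ 2 = ∑ i ∈ S ∪ B 0, g i ^ 2 := N2_sq g _
  have hN0sq : (N2 g S) ^ 2 = ∑ i ∈ S, g i ^ 2 := N2_sq g _
  have hNB0sq : (N2 g (B 0)) ^ 2 = ∑ i ∈ B 0, g i ^ 2 := N2_sq g _
  have haann : 0 ≤ N2 g (S ∪ B 0) := N2_nonneg g _
  have hN0nn : 0 ≤ N2 g S := N2_nonneg g _
  have hNB0nn : 0 ≤ N2 g (B 0) := N2_nonneg g _
  have hSig2nn : 0 ≤ ∑ j ∈ Finset.Ico 1 M, N2 g (B j) :=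
    Finset.sum_nonneg fun j _ => N2_nonneg g _
  have hSig1nn : 0 ≤ ∑ i ∈ A, |g i| := Finset.sum_nonneg fun i _ => abs_nonneg _
  have hN01 : N2 g S + N2 g (B 0) ≤ Real.sqrt 2 * N2 g (S ∪ B 0) := by
    have hsq : (N2 g S + N2 g (B 0)) ^ 2 ≤ (Real.sqrt 2 * N2 g (S ∪ B 0)) ^ 2 := by
      rw [mul_pow, hsqrt2sq]
      nlinarith [sq_nonneg (N2 g S - N2 g (B 0)), haa2, hN0sq, hNB0sq, hQsplit]
    calc N2 g S + N2 g (B 0) = Real.sqrt ((N2 g S + N2 g (B 0)) ^ 2) :=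
          (Real.sqrt_sq (by positivity)).symm
      _ ≤ Real.sqrt ((Real.sqrt 2 * N2 g (S ∪ B 0)) ^ 2) := Real.sqrt_le_sqrt hsq
      _ = Real.sqrt 2 * N2 g (S ∪ B 0) := Real.sqrt_sq (by positivity)
  -- degenerate case : the union has zero energy
  rcases eq_or_lt_of_le haann with hz | hapos
  · have hQ0 : ∑ i ∈ S ∪ B 0, g i ^ 2 = 0 := by rw [← haa2, ← hz]; ring
    have hSg : ∀ i ∈ S, g i = 0 := by
      intro i hi
      have := (Finset.sum_eq_zero_iff_of_nonneg
        (fun i _ => sq_nonneg (g i))).mp hQ0 i (Finset.mem_union_left _ hi)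
      exact pow_eq_zero_iff (by norm_num) |>.mp this
    calc ∑ i ∈ S, |g i| = 0 := Finset.sum_eq_zero fun i hi => by rw [hSg i hi, abs_zero]
      _ ≤ ∑ i ∈ A, |g i| := hSig1nn
  -- main inequality from RIP
  have hkey : (1 - δ) * N2 g (S ∪ B 0) ≤ Real.sqrt 2 * δ * ∑ j ∈ Finset.Ico 1 M, N2 g (B j) := by
    have hc : (1 - δ) * N2 g (S ∪ B 0) * N2 g (S ∪ B 0)
        ≤ (Real.sqrt 2 * δ * ∑ j ∈ Finset.Ico 1 M, N2 g (B j)) * N2 g (S ∪ B 0) := by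
      have e1 : (1 - δ) * N2 g (S ∪ B 0) * N2 g (S ∪ B 0)
          = (1 - δ) * (∑ i ∈ S ∪ B 0, g i ^ 2) := by rw [← haa2]; ring
      rw [e1]
      calc (1 - δ) * (∑ i ∈ S ∪ B 0, g i ^ 2)
          ≤ (Φ.mulVec v01) ⬝ᵥ (Φ.mulVec v01) := hRlow
        _ ≤ δ * (N2 g S + N2 g (B 0)) * ∑ j ∈ Finset.Ico 1 M, N2 g (B j) := hP1
        _ ≤ δ * (Real.sqrt 2 * N2 g (S ∪ B 0)) * ∑ j ∈ Finset.Ico 1 M, N2 g (B j) := by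
            apply mul_le_mul_of_nonneg_right _ hSig2nn
            exact mul_le_mul_of_nonneg_left hN01 hδ0.le
        _ = (Real.sqrt 2 * δ * ∑ j ∈ Finset.Ico 1 M, N2 g (B j)) * N2 g (S ∪ B 0) := by
            ring
    exact le_of_mul_le_mul_right hc hapos
  -- block decay
  have hdecay : ∀ j ∈ Finset.Ico 1 M,
      Real.sqrt s * N2 g (B j) ≤ ∑ i ∈ B (j-1), |g i| := by
    intro j hj
    rw [Finset.mem_Ico] at hj
    have hLnn : 0 ≤ ∑ i ∈ B (j-1), |g i| := Finset.sum_nonneg fun i _ => abs_nonneg _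
    rcases Finset.eq_empty_or_nonempty (C j) with hCe | ⟨k₀, hk₀⟩
    · have hBe : B j = ∅ := by rw [hB]; simp only; rw [hCe, Finset.image_empty]
      have : N2 g (B j) = 0 := by rw [N2, hBe, Finset.sum_empty, Real.sqrt_zero]
      rw [this, mul_zero]
      exact hLnn
    · rw [hCmem] at hk₀
      have hjs_n : j * s ≤ n := by omega
      have hj1 : j - 1 + 1 = j := by omega
      have hmulfact : (j-1) * s + s = j * s := by
        calc (j-1) * s + s = ((j-1) + 1) * s := by ring
          _ = j * s := by rw [hj1]
      have hfullcard : (C (j-1)).card = s := by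
        simp only [hC, Nat.card_Ico, hj1, min_eq_left hjs_n]
        omega
      have hs' : (0:ℝ) < (s:ℝ) := by exact_mod_cast hspos
      have hL'nn : (0:ℝ) ≤ ∑ k' ∈ C (j-1), |g (E k')| :=
        Finset.sum_nonneg fun k' _ => abs_nonneg _
      have hpt : ∀ k ∈ C j, |g (E k)| ≤ (∑ k' ∈ C (j-1), |g (E k')|) / s := by
        intro k hk
        rw [hCmem] at hk
        have hub : ∀ k' ∈ C (j-1), |g (E k)| ≤ |g (E k')| := by
          intro k' hk'
          rw [hCmem] at hk'
          have hk's : k' < (j-1+1) * s := hk'.2.1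
          rw [hj1] at hk's
          exact hEanti k' k (by omega) hk.2.2
        have hconst : (∑ _k' ∈ C (j-1), |g (E k)|) = (s:ℝ) * |g (E k)| := by
          rw [Finset.sum_const, hfullcard, nsmul_eq_mul]
        have hsum := Finset.sum_le_sum hub
        rw [hconst] at hsum
        rw [le_div_iff₀ hs']
        linarith
      have hQB : ∑ i ∈ B j, g i ^ 2
          ≤ (s:ℝ) * ((∑ k' ∈ C (j-1), |g (E k')|) / s) ^ 2 := by
        rw [hBsum]
        calc ∑ k ∈ C j, g (E k) ^ 2
            ≤ ∑ _k ∈ C j, ((∑ k' ∈ C (j-1), |g (E k')|) / s) ^ 2 :=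
              Finset.sum_le_sum (fun k hk => by
                rw [← sq_abs]
                exact pow_le_pow_left₀ (abs_nonneg _) (hpt k hk) 2)
          _ = ((C j).card : ℝ) * ((∑ k' ∈ C (j-1), |g (E k')|) / s) ^ 2 := by
              rw [Finset.sum_const, nsmul_eq_mul]
          _ ≤ (s:ℝ) * ((∑ k' ∈ C (j-1), |g (E k')|) / s) ^ 2 := by
              apply mul_le_mul_of_nonneg_right _ (by positivity)
              exact_mod_cast hCcard j
      have h2 : (s:ℝ) * ((∑ k' ∈ C (j-1), |g (E k')|) / s) ^ 2
          = (∑ k' ∈ C (j-1), |g (E k')|) ^ 2 / s := by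
        field_simp
      have h3 : N2 g (B j) ≤ Real.sqrt ((∑ k' ∈ C (j-1), |g (E k')|) ^ 2 / s) := by
        rw [N2]
        apply Real.sqrt_le_sqrt
        rw [← h2]
        exact hQB
      have h4 : Real.sqrt s * Real.sqrt ((∑ k' ∈ C (j-1), |g (E k')|) ^ 2 / s)
          = ∑ k' ∈ C (j-1), |g (E k')| := by
        rw [← Real.sqrt_mul (le_of_lt hs')]
        rw [show (s:ℝ) * ((∑ k' ∈ C (j-1), |g (E k')|) ^ 2 / s)
          = (∑ k' ∈ C (j-1), |g (E k')|) ^ 2 by field_simp]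
        exact Real.sqrt_sq hL'nn
      calc Real.sqrt s * N2 g (B j)
          ≤ Real.sqrt s * Real.sqrt ((∑ k' ∈ C (j-1), |g (E k')|) ^ 2 / s) :=
            mul_le_mul_of_nonneg_left h3 (Real.sqrt_nonneg _)
        _ = ∑ k' ∈ C (j-1), |g (E k')| := h4
        _ = ∑ i ∈ B (j-1), |g i| := (hBsum (j-1) (fun i => |g i|)).symm
  -- summing the decay
  have hSig : Real.sqrt s * (∑ j ∈ Finset.Ico 1 M, N2 g (B j)) ≤ ∑ i ∈ A, |g i| := by
    calc Real.sqrt s * (∑ j ∈ Finset.Ico 1 M, N2 g (B j))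
        = ∑ j ∈ Finset.Ico 1 M, Real.sqrt s * N2 g (B j) := Finset.mul_sum _ _ _
      _ ≤ ∑ j ∈ Finset.Ico 1 M, ∑ i ∈ B (j-1), |g i| := Finset.sum_le_sum hdecay
      _ = ∑ j ∈ Finset.range (M-1), ∑ i ∈ B (1+j-1), |g i| :=
          Finset.sum_Ico_eq_sum_range (fun j => ∑ i ∈ B (j-1), |g i|) 1 M
      _ = ∑ j ∈ Finset.range (M-1), ∑ i ∈ B j, |g i| :=
          Finset.sum_congr rfl fun j _ => by rw [show 1 + j - 1 = j by omega]
      _ ≤ ∑ j ∈ Finset.range M, ∑ i ∈ B j, |g i| :=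
          Finset.sum_le_sum_of_subset_of_nonneg
            (Finset.range_subset_range.mpr (Nat.sub_le M 1))
            (fun j _ _ => Finset.sum_nonneg fun i _ => abs_nonneg _)
      _ = ∑ i ∈ A, |g i| := (hAsum fun i => |g i|).symm
  -- Cauchy-Schwarz on S
  have hCS : ∑ i ∈ S, |g i| ≤ Real.sqrt s * N2 g S := by
    have h1 := Finset.sum_mul_sq_le_sq_mul_sq S (fun _ => (1:ℝ)) (fun i => |g i|)
    simp only [one_mul, one_pow, Finset.sum_const, nsmul_eq_mul, mul_one, sq_abs] at h1
    have h2 : (∑ i ∈ S, |g i|) ^ 2 ≤ (s:ℝ) * ∑ i ∈ S, g i ^ 2 := by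
      calc (∑ i ∈ S, |g i|) ^ 2 ≤ (S.card : ℝ) * ∑ i ∈ S, g i ^ 2 := h1
        _ ≤ (s:ℝ) * ∑ i ∈ S, g i ^ 2 := by
            apply mul_le_mul_of_nonneg_right _ (Finset.sum_nonneg fun i _ => sq_nonneg _)
            exact_mod_cast hS
    have hLHSnn : 0 ≤ ∑ i ∈ S, |g i| := Finset.sum_nonneg fun i _ => abs_nonneg _
    calc ∑ i ∈ S, |g i| = Real.sqrt ((∑ i ∈ S, |g i|) ^ 2) := (Real.sqrt_sq hLHSnn).symm
      _ ≤ Real.sqrt ((s:ℝ) * ∑ i ∈ S, g i ^ 2) := Real.sqrt_le_sqrt h2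
      _ = Real.sqrt s * Real.sqrt (∑ i ∈ S, g i ^ 2) :=
          Real.sqrt_mul (by positivity) _
      _ = Real.sqrt s * N2 g S := rfl
  have hN0aa : N2 g S ≤ N2 g (S ∪ B 0) := by
    apply Real.sqrt_le_sqrt
    exact Finset.sum_le_sum_of_subset_of_nonneg Finset.subset_union_left
      (fun i _ _ => sq_nonneg _)
  -- final assembly
  have hLHSa : ∑ i ∈ S, |g i| ≤ Real.sqrt s * N2 g (S ∪ B 0) :=
    le_trans hCS (mul_le_mul_of_nonneg_left hN0aa (Real.sqrt_nonneg _))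
  have hfinal : (1 - δ) * (∑ i ∈ S, |g i|) ≤ (1 - δ) * (∑ i ∈ A, |g i|) := by
    calc (1 - δ) * (∑ i ∈ S, |g i|)
        ≤ (1 - δ) * (Real.sqrt s * N2 g (S ∪ B 0)) :=
          mul_le_mul_of_nonneg_left hLHSa h1δ.le
      _ = Real.sqrt s * ((1 - δ) * N2 g (S ∪ B 0)) := by ring
      _ ≤ Real.sqrt s * (Real.sqrt 2 * δ * ∑ j ∈ Finset.Ico 1 M, N2 g (B j)) :=
          mul_le_mul_of_nonneg_left hkey (Real.sqrt_nonneg _)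
      _ = (Real.sqrt 2 * δ) * (Real.sqrt s * ∑ j ∈ Finset.Ico 1 M, N2 g (B j)) := by ring
      _ ≤ (Real.sqrt 2 * δ) * (∑ i ∈ A, |g i|) :=
          mul_le_mul_of_nonneg_left hSig (by positivity)
      _ ≤ (1 - δ) * (∑ i ∈ A, |g i|) :=
          mul_le_mul_of_nonneg_right hsqrt2.le hSig1nn
  exact le_of_mul_le_mul_left hfinal h1δ

end Stmt12Aux

/-- if `û` is the unique ℓ0-minimizer over the affine feasible set
`F = {u : Φ u = y}`, is `s`-sparse, and `Φ` satisfies the restricted isometry property of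
order `2s` with constant `δ < √2 - 1`, then `û` minimizes the ℓ1-norm over `F`. -/
theorem stmt12
    (d T s : ℕ)
    (Φ : Matrix (Fin d) (Fin T) ℝ)
    (y : Fin d → ℝ)
    (uhat : Fin T → ℝ)
    (hfeas : Φ.mulVec uhat = y)
    (hsparse : l0 uhat ≤ s)
    -- `û` is the unique minimizer of `‖·‖₀` over `F`
    (hmin : ∀ u : Fin T → ℝ, Φ.mulVec u = y → l0 uhat ≤ l0 u)
    (huniq : ∀ u : Fin T → ℝ, Φ.mulVec u = y → l0 u = l0 uhat → u = uhat)
    -- restricted isometry property of order `2s` with constant `δ < √2 - 1`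
    (hRIP : ∃ δ : ℝ, 0 < δ ∧ δ < Real.sqrt 2 - 1 ∧
      ∀ z : Fin T → ℝ, l0 z ≤ 2 * s →
        (1 - δ) * (∑ k, (z k) ^ 2) ≤ (∑ j, (Φ.mulVec z j) ^ 2) ∧
          (∑ j, (Φ.mulVec z j) ^ 2) ≤ (1 + δ) * (∑ k, (z k) ^ 2)) :
    ∀ u : Fin T → ℝ, Φ.mulVec u = y → ∑ k, |uhat k| ≤ ∑ k, |u k| := by
  intro u hu
  obtain ⟨δ, hδ0, hδ1, hR⟩ := hRIP
  set g : Fin T → ℝ := u - uhat with hgdef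
  have hker : Φ.mulVec g = 0 := by
    rw [hgdef, Matrix.mulVec_sub, hu, hfeas, sub_self]
  set S : Finset (Fin T) := Finset.univ.filter fun i => uhat i ≠ 0 with hSdef
  have hScard : S.card ≤ s := hsparse
  have hnsp := Stmt12Aux.nsp hδ0 hδ1 hR g hker S hScard
  have huhat0 : ∀ i ∈ Sᶜ, uhat i = 0 := by
    intro i hi
    rw [Finset.mem_compl, hSdef, Finset.mem_filter] at hi
    push_neg at hi
    exact hi (Finset.mem_univ i)
  have hsplit : ∀ v : Fin T → ℝ, ∑ k, |v k| = (∑ i ∈ S, |v i|) + ∑ i ∈ Sᶜ, |v i| := by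
    intro v
    rw [← Finset.sum_add_sum_compl S]
  have h1 : ∑ i ∈ Sᶜ, |uhat i| = 0 :=
    Finset.sum_eq_zero fun i hi => by rw [huhat0 i hi, abs_zero]
  have h2 : ∀ i ∈ Sᶜ, |u i| = |g i| := by
    intro i hi
    rw [hgdef]
    simp only [Pi.sub_apply, huhat0 i hi, sub_zero]
  have h3 : ∀ i ∈ S, |uhat i| - |g i| ≤ |u i| := by
    intro i _
    have : uhat i = u i - g i := by rw [hgdef]; simp
    rw [this]
    have := abs_sub (u i) (g i)
    linarith [abs_sub_abs_le_abs_sub (u i) (g i), abs_sub_le (u i) (g i) 0]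
  have h4 : (∑ i ∈ S, |uhat i|) - ∑ i ∈ S, |g i| ≤ ∑ i ∈ S, |u i| := by
    rw [← Finset.sum_sub_distrib]
    exact Finset.sum_le_sum h3
  have h5 : ∑ i ∈ Sᶜ, |u i| = ∑ i ∈ Sᶜ, |g i| := Finset.sum_congr rfl h2
  rw [hsplit u, hsplit uhat, h1, h5, add_zero]
  linarith [hnsp, h4]
end
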